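/- arXiv:1406.1901 — 2 statements merged into one kernel-verified Lean document; each statement's English description precedes it below -/
import Mathlib

section
/- Let (X, ρ) be a metric space, p ≥ 1, m a positive integer, and ρ_m a metric on X^m satisfying ρ_m((x_1,...,x_m),(y_1,...,y_m)) ≤ (∑_{i=1}^m ρ(x_i,y_i)^p)^{1/p} for all tuples. Then the p-Wasserstein distance (with respect to ρ_m) between the product measures satisfies W_{ρ_m,p}(μ^{⊗m}, ν^{⊗m}) ≤ m^{1/p} W_{ρ,p}(μ, ν) for all probability measures μ, ν on X. -/
/-!
If `π` couples `μ` and `ν`, then `π^{⊗m}`, read as a measure on pairs of `m`-tuples, couples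
`μ^{⊗m}` and `ν^{⊗m}`. By the domination hypothesis its `p`-cost for `ρ_m` is at most the
integral of `∑ i, ρ(xᵢ, yᵢ)^p`, which is `m` times the `p`-cost of `π`; take the infimum
over `π`. Nothing makes `ρ` measurable on `X × X`, so these are lower Lebesgue integrals, which are
not additive; the integral of the sum is bounded coordinate by coordinate through the inequality
form of Tonelli's theorem, `lintegral_prod_le`.
-/

open MeasureTheory ENNReal

/-- The p-Wasserstein "distance" (to the power 1, in ℝ≥0∞) associated to a cost
function `d`: infimum over couplings of the p-th root of the p-cost. -/
noncomputable def Wp {α : Type*} [MeasurableSpace α] (d : α → α → ℝ≥0∞) (p : ℝ)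
    (μ ν : Measure α) : ℝ≥0∞ :=
  ⨅ (π : Measure (α × α)) (_ : π.map Prod.fst = μ) (_ : π.map Prod.snd = ν),
    (∫⁻ z, d z.1 z.2 ^ p ∂π) ^ (1 / p)

theorem lintegral_pi_sum_le : ∀ {n : ℕ} {Z : Fin n → Type*} [∀ i, MeasurableSpace (Z i)]
    (π : ∀ i, Measure (Z i)) [∀ i, IsProbabilityMeasure (π i)] (h : ∀ i, Z i → ℝ≥0∞),
    ∫⁻ f, ∑ i, h i (f i) ∂Measure.pi π ≤ ∑ i, ∫⁻ z, h i z ∂π i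
  | 0, _, _, _, _, _ => by simp
  | n + 1, Z, _, π, _, h => by
    set e := MeasurableEquiv.piFinSuccAbove Z 0
    rw [(measurePreserving_piFinSuccAbove π 0).symm.lintegral_map_equiv _ e.symm]
    calc ∫⁻ q, ∑ i, h i (e.symm q i) ∂(π 0).prod (Measure.pi fun j => π (Fin.succAbove 0 j))
        ≤ ∫⁻ z, ∫⁻ y, h 0 z + ∑ j : Fin n, h (Fin.succAbove 0 j) (y j)
            ∂Measure.pi (fun j => π (Fin.succAbove 0 j)) ∂π 0 := by
          refine (lintegral_prod_le _).trans_eq ?_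
          congr! 3 with z; funext y
          rw [Fin.sum_univ_succAbove _ 0]
          simp only [e, MeasurableEquiv.piFinSuccAbove_symm_apply, Fin.insertNthEquiv_apply,
            Fin.insertNth_apply_same, Fin.insertNth_apply_succAbove]
      _ ≤ ∫⁻ z, h 0 z + ∑ j : Fin n, ∫⁻ y, h (Fin.succAbove 0 j) y ∂π (Fin.succAbove 0 j)
            ∂π 0 := by
          refine lintegral_mono fun z => ?_
          rw [lintegral_add_left measurable_const, lintegral_const, measure_univ, mul_one]
          gcongr
          exact lintegral_pi_sum_le _ _
      _ = ∑ i, ∫⁻ z, h i z ∂π i := by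
          rw [lintegral_add_right _ measurable_const, lintegral_const, measure_univ, mul_one,
            Fin.sum_univ_succAbove _ 0]

section Coupling

variable {ι α β : Type*} [Fintype ι] [MeasurableSpace α] [MeasurableSpace β]
  (π : Measure (α × β))

theorem map_fst_map_arrowProdEquivProdArrow_pi {μ : Measure α} [SigmaFinite μ]
    (hμ : π.map Prod.fst = μ) :
    ((Measure.pi fun _ : ι => π).map (MeasurableEquiv.arrowProdEquivProdArrow α β ι)).map
      Prod.fst = Measure.pi fun _ => μ := by
  rw [Measure.map_map measurable_fst (MeasurableEquiv.measurable _)]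
  exact (measurePreserving_pi (fun _ => π) (fun _ => μ) fun _ => ⟨measurable_fst, hμ⟩).map_eq

theorem map_snd_map_arrowProdEquivProdArrow_pi {ν : Measure β} [SigmaFinite ν]
    (hν : π.map Prod.snd = ν) :
    ((Measure.pi fun _ : ι => π).map (MeasurableEquiv.arrowProdEquivProdArrow α β ι)).map
      Prod.snd = Measure.pi fun _ => ν := by
  rw [Measure.map_map measurable_snd (MeasurableEquiv.measurable _)]
  exact (measurePreserving_pi (fun _ => π) (fun _ => ν) fun _ => ⟨measurable_snd, hν⟩).map_eq

end Coupling

theorem Wp_le_of_map_eq {α : Type*} [MeasurableSpace α] (d : α → α → ℝ≥0∞) (p : ℝ)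
    {μ ν : Measure α} (π : Measure (α × α)) (hμ : π.map Prod.fst = μ)
    (hν : π.map Prod.snd = ν) :
    Wp d p μ ν ≤ (∫⁻ z, d z.1 z.2 ^ p ∂π) ^ (1 / p) :=
  iInf₂_le_of_le π hμ (iInf_le _ hν)

theorem Wp_pi_le_of_map_eq {X : Type*} [PseudoEMetricSpace X] [MeasurableSpace X]
    {p : ℝ} (hp : 0 < p) {m : ℕ} (dm : (Fin m → X) → (Fin m → X) → ℝ≥0∞)
    (hdom : ∀ x y, dm x y ≤ (∑ i, edist (x i) (y i) ^ p) ^ (1 / p))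
    {μ ν : Measure X} [IsProbabilityMeasure μ] [IsProbabilityMeasure ν] (π : Measure (X × X))
    (hμ : π.map Prod.fst = μ) (hν : π.map Prod.snd = ν) :
    Wp dm p (Measure.pi fun _ => μ) (Measure.pi fun _ => ν)
      ≤ (m : ℝ≥0∞) ^ (1 / p) * (∫⁻ z, edist z.1 z.2 ^ p ∂π) ^ (1 / p) := by
  have : IsProbabilityMeasure π := by
    subst hμ; exact Measure.isProbabilityMeasure_of_map Prod.fst
  set Φ := MeasurableEquiv.arrowProdEquivProdArrow X X (Fin m)
  have hcost : ∫⁻ z, dm z.1 z.2 ^ p ∂(Measure.pi fun _ => π).map Φ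
      ≤ m * ∫⁻ z, edist z.1 z.2 ^ p ∂π :=
    calc ∫⁻ z, dm z.1 z.2 ^ p ∂(Measure.pi fun _ => π).map Φ
        = ∫⁻ f, dm (Φ f).1 (Φ f).2 ^ p ∂Measure.pi fun _ => π := lintegral_map_equiv _ Φ
      _ ≤ ∫⁻ f, ∑ i, edist (f i).1 (f i).2 ^ p ∂Measure.pi fun _ => π := by
          refine lintegral_mono fun f => ?_
          calc dm (Φ f).1 (Φ f).2 ^ p
              ≤ ((∑ i, edist (f i).1 (f i).2 ^ p) ^ (1 / p)) ^ p := by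
                gcongr; exact hdom _ _
            _ = ∑ i, edist (f i).1 (f i).2 ^ p := by
                rw [← ENNReal.rpow_mul, one_div_mul_cancel hp.ne', ENNReal.rpow_one]
      _ ≤ ∑ _i : Fin m, ∫⁻ z, edist z.1 z.2 ^ p ∂π :=
          lintegral_pi_sum_le (fun _ => π) fun _ z => edist z.1 z.2 ^ p
      _ = m * ∫⁻ z, edist z.1 z.2 ^ p ∂π := by simp
  calc Wp dm p (Measure.pi fun _ => μ) (Measure.pi fun _ => ν)
      ≤ (∫⁻ z, dm z.1 z.2 ^ p ∂(Measure.pi fun _ => π).map Φ) ^ (1 / p) :=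
        Wp_le_of_map_eq dm p _ (map_fst_map_arrowProdEquivProdArrow_pi π hμ)
          (map_snd_map_arrowProdEquivProdArrow_pi π hν)
    _ ≤ ((m : ℝ≥0∞) * ∫⁻ z, edist z.1 z.2 ^ p ∂π) ^ (1 / p) := by gcongr
    _ = (m : ℝ≥0∞) ^ (1 / p) * (∫⁻ z, edist z.1 z.2 ^ p ∂π) ^ (1 / p) :=
        ENNReal.mul_rpow_of_nonneg _ _ (by positivity)

theorem stmt1_general {X : Type*} [MetricSpace X] [MeasurableSpace X]
    (p : ℝ) (hp : 1 ≤ p) (m : ℕ) (hm : 0 < m)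
    (dm : (Fin m → X) → (Fin m → X) → ℝ≥0∞)
    (hdom : ∀ x y, dm x y ≤ (∑ i, edist (x i) (y i) ^ p) ^ (1 / p))
    (μ ν : Measure X) [IsProbabilityMeasure μ] [IsProbabilityMeasure ν] :
    Wp dm p (Measure.pi fun _ => μ) (Measure.pi fun _ => ν)
      ≤ (m : ℝ≥0∞) ^ (1 / p) * Wp (fun x y : X => edist x y) p μ ν := by
  have hp₀ : 0 < p := by linarith
  have hc₀ : (m : ℝ≥0∞) ^ (1 / p) ≠ 0 := by positivity
  have hc : (m : ℝ≥0∞) ^ (1 / p) ≠ ∞ := by finiteness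
  simp only [Wp, ENNReal.mul_iInf_of_ne hc₀ hc]
  exact le_iInf₂ fun π hμ => le_iInf fun hν => Wp_pi_le_of_map_eq hp₀ dm hdom π hμ hν

theorem stmt1 {X : Type*} [MetricSpace X] [MeasurableSpace X] [BorelSpace X]
    (p : ℝ) (hp : 1 ≤ p) (m : ℕ) (hm : 0 < m)
    (dm : (Fin m → X) → (Fin m → X) → ℝ≥0∞)
    (hself : ∀ x, dm x x = 0) (hsymm : ∀ x y, dm x y = dm y x)
    (htri : ∀ x y z, dm x z ≤ dm x y + dm y z)
    (hdom : ∀ x y, dm x y ≤ (∑ i, edist (x i) (y i) ^ p) ^ (1 / p))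
    (μ ν : Measure X) [IsProbabilityMeasure μ] [IsProbabilityMeasure ν] :
    Wp dm p (Measure.pi fun _ => μ) (Measure.pi fun _ => ν)
      ≤ (m : ℝ≥0∞) ^ (1 / p) * Wp (fun x y : X => edist x y) p μ ν :=
  stmt1_general p hp m hm dm hdom μ ν
end

section
/- Let a > 0, b > 0, m ≥ 2 an integer, and set r_m = 2(log m / (a m))^{1/b}. Then ∫_{r > r_m} (4^b/(a r^b)) exp(− m (a/2^b) r^b) dr ≤ 2 C(a,b) (log m / (a m))^{1/b} / (log m)^2 for some constant C(a,b) > 0 depending only on a and b. -/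
/-!
With `c = m a / 2 ^ b` the integrand is `(4 ^ b / a) r ^ (-b) exp (-c r ^ b)`, and the lower limit
`R = 2 (log m / (a m)) ^ (1 / b)` is chosen so that `c R ^ b = log m`. Substituting `u = c r ^ b`
turns the integral into `b⁻¹ c ^ (1 - 1/b)` times the incomplete Gamma tail
`∫_{u > log m} u ^ (1/b - 2) exp (-u)`, which is `O((log m) ^ (1/b - 2) / m)` because
`log m ≥ log 2` stays away from `0`. Collecting the powers of `c` and `log m` leaves
`(log m / (a m)) ^ (1/b) / (log m) ^ 2`.
-/

open MeasureTheory Set Real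
open scoped Nat

lemma pow_le_factorial_div_pow_mul_exp (n : ℕ) {θ x : ℝ} (hθ : 0 < θ) (hx : 0 ≤ x) :
    x ^ n ≤ n ! / θ ^ n * exp (θ * x) := by
  have h := pow_div_factorial_le_exp (θ * x) (mul_nonneg hθ.le hx) n
  rw [div_le_iff₀ (by positivity), mul_pow] at h
  rw [div_mul_eq_mul_div, le_div_iff₀ (by positivity)]
  linarith

lemma exists_rpow_mul_exp_neg_le (s : ℝ) {L₀ : ℝ} (hL₀ : 0 < L₀) :
    ∃ K > 0, ∀ L u, L₀ ≤ L → L ≤ u →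
      u ^ s * exp (-u) ≤ K * L ^ s * exp (-L / 2) * exp (-(1 / 2) * u) := by
  set n := ⌈s⌉₊
  refine ⟨n ! / (L₀ / 2) ^ n * exp (L₀ / 2), by positivity, fun L u hL hu => ?_⟩
  have hL0 : 0 < L := hL₀.trans_le hL
  have hu0 : 0 < u := hL0.trans_le hu
  -- `(u / L) ^ s ≤ (u / L) ^ ⌈s⌉₊ ≤ C exp (θ u / L)` with `θ = L₀ / 2`, and `L ≥ L₀` makes
  -- `θ u / L` grow no faster than `(u - L) / 2`.
  have hratio : L₀ / 2 * (u / L) ≤ L₀ / 2 + (u - L) / 2 :=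
    calc L₀ / 2 * (u / L) = L₀ / 2 + L₀ / L * ((u - L) / 2) := by field_simp; ring
      _ ≤ L₀ / 2 + (u - L) / 2 := by
        gcongr
        exact mul_le_of_le_one_left (by linarith) (div_le_one_of_le₀ hL hL0.le)
  have hpow : (u / L) ^ s ≤ n ! / (L₀ / 2) ^ n * exp (L₀ / 2 + (u - L) / 2) :=
    calc (u / L) ^ s ≤ (u / L) ^ (n : ℝ) :=
          rpow_le_rpow_of_exponent_le ((one_le_div hL0).2 hu) (Nat.le_ceil s)
      _ = (u / L) ^ n := rpow_natCast _ n
      _ ≤ n ! / (L₀ / 2) ^ n * exp (L₀ / 2 * (u / L)) :=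
          pow_le_factorial_div_pow_mul_exp n (by positivity) (by positivity)
      _ ≤ n ! / (L₀ / 2) ^ n * exp (L₀ / 2 + (u - L) / 2) := by gcongr
  have hexp : exp (L₀ / 2 + (u - L) / 2) * exp (-u) =
      exp (L₀ / 2) * exp (-L / 2) * exp (-(1 / 2) * u) := by
    simp only [← exp_add]
    ring_nf
  calc u ^ s * exp (-u) = L ^ s * (u / L) ^ s * exp (-u) := by
        rw [← mul_rpow hL0.le (by positivity), mul_div_cancel₀ _ hL0.ne']
    _ ≤ L ^ s * (n ! / (L₀ / 2) ^ n * exp (L₀ / 2 + (u - L) / 2)) * exp (-u) := by gcongr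
    _ = n ! / (L₀ / 2) ^ n * exp (L₀ / 2) * L ^ s * exp (-L / 2) * exp (-(1 / 2) * u) := by
        rw [mul_assoc, mul_assoc, hexp]
        ring

lemma exists_integral_rpow_mul_exp_neg_Ioi_le (s : ℝ) {L₀ : ℝ} (hL₀ : 0 < L₀) :
    ∃ K > 0, ∀ L, L₀ ≤ L → ∫ u in Ioi L, u ^ s * exp (-u) ≤ K * L ^ s * exp (-L) := by
  obtain ⟨K, hK, hbound⟩ := exists_rpow_mul_exp_neg_le s hL₀
  refine ⟨2 * K, by positivity, fun L hL => ?_⟩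
  have hL0 : 0 < L := hL₀.trans_le hL
  have hhalf : (-(1 / 2) : ℝ) < 0 := by norm_num
  calc ∫ u in Ioi L, u ^ s * exp (-u)
      ≤ ∫ u in Ioi L, K * L ^ s * exp (-L / 2) * exp (-(1 / 2) * u) := by
        refine integral_mono_of_nonneg ?_ ((integrableOn_exp_mul_Ioi hhalf L).const_mul _) ?_
        · exact ae_restrict_of_forall_mem measurableSet_Ioi fun u hu =>
            mul_nonneg (rpow_nonneg (hL0.trans hu).le _) (exp_nonneg _)
        · exact ae_restrict_of_forall_mem measurableSet_Ioi fun u hu => hbound L u hL (le_of_lt hu)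
    _ = K * L ^ s * exp (-L / 2) * (2 * exp (-L / 2)) := by
        rw [integral_const_mul, integral_exp_mul_Ioi hhalf]
        ring_nf
    _ = 2 * K * L ^ s * exp (-L) := by
        rw [show exp (-L) = exp (-L / 2) * exp (-L / 2) by rw [← exp_add]; ring_nf]
        ring

lemma integral_rpow_mul_exp_neg_mul_Ioi (s : ℝ) {c ρ : ℝ} (hc : 0 < c) (hρ : 0 ≤ ρ) :
    ∫ x in Ioi ρ, x ^ s * exp (-(c * x)) =
      c ^ (-(s + 1)) * ∫ u in Ioi (c * ρ), u ^ s * exp (-u) := by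
  have h := integral_comp_mul_left_Ioi (fun u => u ^ s * exp (-u)) ρ hc
  calc ∫ x in Ioi ρ, x ^ s * exp (-(c * x))
      = c ^ (-s) * ∫ x in Ioi ρ, (c * x) ^ s * exp (-(c * x)) := by
        rw [← integral_const_mul]
        refine setIntegral_congr_fun measurableSet_Ioi fun x hx => ?_
        rw [mul_rpow hc.le (hρ.trans (le_of_lt hx)), ← mul_assoc, ← mul_assoc,
          ← rpow_add hc, neg_add_cancel, rpow_zero, one_mul]
    _ = c ^ (-(s + 1)) * ∫ u in Ioi (c * ρ), u ^ s * exp (-u) := by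
        rw [h, smul_eq_mul, ← mul_assoc, ← rpow_neg_one, ← rpow_add hc, neg_add]

lemma integral_inv_rpow_mul_exp_neg_mul_rpow_Ioi {b c R : ℝ} (hb : 0 < b) (hc : 0 < c)
    (hR : 0 ≤ R) :
    ∫ r in Ioi R, (r ^ b)⁻¹ * exp (-(c * r ^ b)) =
      b⁻¹ * c ^ (1 - b⁻¹) * ∫ u in Ioi (c * R ^ b), u ^ (b⁻¹ - 2) * exp (-u) := by
  have h := integral_comp_rpow_Ioi_of_pos' (g := fun v => v ^ (b⁻¹ - 2) * exp (-(c * v))) hb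
    (c := R ^ b) (by positivity)
  rw [rpow_rpow_inv hR hb.ne'] at h
  calc ∫ r in Ioi R, (r ^ b)⁻¹ * exp (-(c * r ^ b))
      = b⁻¹ * ∫ x in Ioi R, (b * x ^ (b - 1)) • ((x ^ b) ^ (b⁻¹ - 2) * exp (-(c * x ^ b))) := by
        rw [← integral_const_mul]
        refine setIntegral_congr_fun measurableSet_Ioi fun x hx => ?_
        have hx : 0 < x := hR.trans_lt hx
        have hpow : x ^ (b - 1) * (x ^ b) ^ (b⁻¹ - 2) = (x ^ b)⁻¹ := by
          rw [← rpow_mul hx.le, ← rpow_add hx, ← rpow_neg hx.le]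
          congr 1
          field_simp
          ring
        rw [smul_eq_mul, ← hpow]
        field_simp
    _ = b⁻¹ * c ^ (1 - b⁻¹) * ∫ u in Ioi (c * R ^ b), u ^ (b⁻¹ - 2) * exp (-u) := by
        rw [h, integral_rpow_mul_exp_neg_mul_Ioi _ hc (by positivity), mul_assoc]
        congr 3
        ring

lemma exists_integral_inv_rpow_mul_exp_neg_mul_rpow_Ioi_le {b L₀ : ℝ} (hb : 0 < b)
    (hL₀ : 0 < L₀) :
    ∃ K > 0, ∀ c R, 0 < c → 0 < R → L₀ ≤ c * R ^ b →
      ∫ r in Ioi R, (r ^ b)⁻¹ * exp (-(c * r ^ b)) ≤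
        K * c * R / (c * R ^ b) ^ 2 * exp (-(c * R ^ b)) := by
  obtain ⟨K, hK, htail⟩ := exists_integral_rpow_mul_exp_neg_Ioi_le (b⁻¹ - 2) hL₀
  refine ⟨K / b, by positivity, fun c R hc hR hL => ?_⟩
  have hL0 : 0 < c * R ^ b := by positivity
  have hpow : c ^ (1 - b⁻¹) * (c * R ^ b) ^ (b⁻¹ - 2) = c * R / (c * R ^ b) ^ 2 := by
    rw [rpow_sub hc, rpow_one, rpow_sub hL0, mul_rpow hc.le (by positivity),
      rpow_rpow_inv hR.le hb.ne', rpow_two]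
    field_simp
  rw [integral_inv_rpow_mul_exp_neg_mul_rpow_Ioi hb hc hR.le]
  calc b⁻¹ * c ^ (1 - b⁻¹) * ∫ u in Ioi (c * R ^ b), u ^ (b⁻¹ - 2) * exp (-u)
      ≤ b⁻¹ * c ^ (1 - b⁻¹) * (K * (c * R ^ b) ^ (b⁻¹ - 2) * exp (-(c * R ^ b))) := by
        gcongr
        exact htail _ hL
    _ = K / b * (c ^ (1 - b⁻¹) * (c * R ^ b) ^ (b⁻¹ - 2)) * exp (-(c * R ^ b)) := by ring
    _ = K / b * c * R / (c * R ^ b) ^ 2 * exp (-(c * R ^ b)) := by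
        rw [hpow]
        ring

theorem stmt6 (a b : ℝ) (ha : 0 < a) (hb : 0 < b) :
    ∃ C > (0 : ℝ), ∀ m : ℕ, 2 ≤ m →
      (∫ r in Set.Ioi (2 * (Real.log m / (a * m)) ^ (1 / b)),
          4 ^ b / (a * r ^ b) * Real.exp (-(m : ℝ) * (a / 2 ^ b) * r ^ b))
        ≤ 2 * C * (Real.log m / (a * m)) ^ (1 / b) / (Real.log m) ^ 2 := by
  obtain ⟨K, hK, htail⟩ :=
    exists_integral_inv_rpow_mul_exp_neg_mul_rpow_Ioi_le hb (log_pos one_lt_two)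
  refine ⟨2 ^ b * K, by positivity, fun m hm => ?_⟩
  have hm2 : (2 : ℝ) ≤ m := by exact_mod_cast hm
  have hlog : log 2 ≤ log m := log_le_log two_pos hm2
  have hL : 0 < log m := (log_pos one_lt_two).trans_le hlog
  set t := (log m / (a * m)) ^ (1 / b) with ht
  have ht0 : 0 < t := by positivity
  set c : ℝ := m * (a / 2 ^ b) with hc
  have hcR : c * (2 * t) ^ b = log m := by
    rw [mul_rpow two_pos.le ht0.le, ht, one_div, rpow_inv_rpow (by positivity) hb.ne', hc]
    field_simp
  calc ∫ r in Ioi (2 * t), 4 ^ b / (a * r ^ b) * exp (-(m : ℝ) * (a / 2 ^ b) * r ^ b)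
      = 4 ^ b / a * ∫ r in Ioi (2 * t), (r ^ b)⁻¹ * exp (-(c * r ^ b)) := by
        rw [← integral_const_mul]
        congr with r
        rw [hc, neg_mul, neg_mul]
        ring
    _ ≤ 4 ^ b / a * (K * c * (2 * t) / log m ^ 2 * exp (-log m)) := by
        gcongr
        simpa only [hcR] using htail c (2 * t) (by positivity) (by positivity) (hcR ▸ hlog)
    _ = 2 * (2 ^ b * K) * t / log m ^ 2 := by
        rw [exp_neg, exp_log (by positivity), show (4 : ℝ) = 2 * 2 by norm_num,
          mul_rpow two_pos.le two_pos.le, hc]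
        field_simp
end
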